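/- Let K be a field, n ≥ 1, and suppose P, Q ∈ GL_n(K) are such that P M Q ∈ sl_n(K) for every M ∈ sl_n(K) (i.e. tr(PMQ) = 0 whenever tr M = 0). Then QP is a scalar multiple of the identity matrix. -/

import Mathlib

/-!
Cycling the trace turns the hypothesis into `tr (Q P M) = 0` for every traceless `M`. Commutators
are traceless, so `tr ((X A - A X) Y) = tr (A (Y X - X Y)) = 0` for `A = Q P` and all `X, Y`;
nondegeneracy of the trace form then makes `A` commute with every matrix, hence scalar.
-/

namespace Matrix

variable {n R : Type*} [Fintype n] [CommRing R]

theorem commute_of_trace_mul_eq_zero {A : Matrix n n R}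
    (hA : ∀ M : Matrix n n R, M.trace = 0 → (A * M).trace = 0) (X : Matrix n n R) :
    Commute X A := by
  refine ext_iff_trace_mul_left.mpr fun Y => ?_
  have hcomm : (A * (Y * X - X * Y)).trace = 0 :=
    hA _ (by rw [trace_sub, trace_mul_comm, sub_self])
  rw [mul_sub, trace_sub, sub_eq_zero] at hcomm
  calc (Y * (X * A)).trace = (A * (Y * X)).trace := by rw [← mul_assoc, trace_mul_comm]
    _ = (A * (X * Y)).trace := hcomm
    _ = (Y * (A * X)).trace := by rw [← mul_assoc, trace_mul_comm]

theorem mem_range_scalar_of_trace_mul_eq_zero [DecidableEq n] {A : Matrix n n R}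
    (hA : ∀ M : Matrix n n R, M.trace = 0 → (A * M).trace = 0) :
    A ∈ Set.range (scalar n) :=
  mem_range_scalar_iff_commute_single'.mpr fun _ _ => commute_of_trace_mul_eq_zero hA _

end Matrix

open Matrix

theorem stmt_16 {K : Type*} [Field K] {n : ℕ}
    (P Q : Matrix (Fin n) (Fin n) K)
    (h : ∀ M : Matrix (Fin n) (Fin n) K, M.trace = 0 → (P * M * Q).trace = 0) :
    ∃ c : K, Q * P = c • (1 : Matrix (Fin n) (Fin n) K) := by
  have hQP : ∀ M : Matrix (Fin n) (Fin n) K, M.trace = 0 → (Q * P * M).trace = 0 := by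
    intro M hM
    rw [← trace_mul_cycle]
    exact h M hM
  obtain ⟨c, hc⟩ := mem_range_scalar_of_trace_mul_eq_zero hQP
  exact ⟨c, by rw [← hc, smul_one_eq_diagonal, scalar_apply]⟩
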